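/- arXiv:2402.01038 — 2 statements merged into one kernel-verified Lean document; each statement's English description precedes it below -/
import Mathlib

section
/- There exists a constant c > 0 such that for all nonzero k in ℤ³, the sum over all j in ℤ³ with j ≠ 0 and j ≠ k of 1/(|j|² |k−j|²) is at most c/|k|, where |·| denotes the Euclidean norm. -/
/-!
Put `w_K(x) = 1 / (|x|² max(K, |x|)²)`. For `K = |k|` the triangle inequality
`|k| ≤ |j| + |k - j|` gives `1 / (|j|² |k - j|²) ≤ 4 (w_K(j) + w_K(k - j))`, so the sum is at
most `8 ∑ₓ w_K(x)`.
The shell `{‖x‖_∞ = n}` of `ℤ³` has at most `26 n²` points, all with `|x| ≥ n`, hence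
`∑ₓ w_K(x) ≤ 26 ∑_{n ≥ 1} max(K, n)⁻² ≤ 26 (1/K + 2/K)`.
-/

/-- The Euclidean norm of a lattice point in `ℤ³`. -/
noncomputable def en (j : Fin 3 → ℤ) : ℝ := Real.sqrt (∑ i, ((j i : ℝ)) ^ 2)

open Finset

lemma one_div_sq_mul_sq_le {a b K : ℝ} (ha : 0 ≤ a) (hb : 0 ≤ b) (hK : K ≤ a + b) :
    1 / (a ^ 2 * b ^ 2) ≤ 4 * (1 / (a ^ 2 * max K a ^ 2) + 1 / (b ^ 2 * max K b ^ 2)) := by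
  wlog hab : a ≤ b generalizing a b
  · simpa only [mul_comm, add_comm] using this hb ha (by linarith) (by linarith)
  rcases ha.eq_or_lt with rfl | ha
  · simp only [ne_eq, OfNat.ofNat_ne_zero, not_false_eq_true, zero_pow, zero_mul, div_zero]
    positivity
  have hmax : max K a ≤ 2 * b := max_le (by linarith) (by linarith)
  calc 1 / (a ^ 2 * b ^ 2) = 4 * (1 / (a ^ 2 * (2 * b) ^ 2)) := by field_simp; ring
    _ ≤ 4 * (1 / (a ^ 2 * max K a ^ 2)) := by gcongr
    _ ≤ _ := by gcongr; exact le_add_of_nonneg_right (by positivity)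

lemma en_eq_norm (x : Fin 3 → ℤ) : en x = ‖WithLp.toLp 2 fun i => (x i : ℝ)‖ := by
  simp [en, EuclideanSpace.norm_eq]

lemma en_nonneg (x : Fin 3 → ℤ) : 0 ≤ en x := Real.sqrt_nonneg _

lemma en_add_le (x y : Fin 3 → ℤ) : en (x + y) ≤ en x + en y := by
  simp only [en_eq_norm, Pi.add_apply, Int.cast_add]
  exact norm_add_le (WithLp.toLp 2 fun i => (x i : ℝ)) (WithLp.toLp 2 fun i => (y i : ℝ))

lemma abs_le_en (x : Fin 3 → ℤ) (i : Fin 3) : |(x i : ℝ)| ≤ en x :=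
  Real.abs_le_sqrt <| single_le_sum (f := fun i => ((x i : ℝ)) ^ 2) (fun _ _ => sq_nonneg _)
    (mem_univ i)

lemma en_pos {x : Fin 3 → ℤ} (hx : x ≠ 0) : 0 < en x := by
  obtain ⟨i, hi⟩ := Function.ne_iff.mp hx
  exact (abs_pos.mpr (Int.cast_ne_zero.mpr hi)).trans_le (abs_le_en x i)

section Cube

variable {ι : Type*} [Fintype ι] [DecidableEq ι]

noncomputable def cube (ι : Type*) [Fintype ι] [DecidableEq ι] (n : ℕ) : Finset (ι → ℤ) :=
  Fintype.piFinset fun _ => Icc (-n : ℤ) n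

lemma mem_cube {n : ℕ} {x : ι → ℤ} : x ∈ cube ι n ↔ ∀ i, |x i| ≤ n := by
  simp [cube, abs_le]

lemma cube_zero : cube ι 0 = {0} := by
  ext x; simp [mem_cube, funext_iff]

lemma cube_mono : Monotone (cube ι) := fun _ _ h =>
  Fintype.piFinset_subset _ _ fun _ =>
    Icc_subset_Icc (neg_le_neg (Nat.mono_cast h)) (Nat.mono_cast h)

lemma card_cube (n : ℕ) : #(cube ι n) = (2 * n + 1) ^ Fintype.card ι := by
  simp only [cube, Fintype.card_piFinset, Int.card_Icc, prod_const, card_univ]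
  congr 1; omega

lemma exists_subset_cube (T : Finset (ι → ℤ)) : ∃ N, T ⊆ cube ι N := by
  refine ⟨T.sup fun x => ∑ i, (x i).natAbs, fun x hx => mem_cube.mpr fun i => ?_⟩
  have h := (single_le_sum (f := fun i => (x i).natAbs) (fun i _ => Nat.zero_le _)
    (mem_univ i)).trans (le_sup (f := fun x => ∑ i, (x i).natAbs) hx)
  rw [Int.abs_eq_natAbs]
  exact_mod_cast h

lemma exists_le_abs_of_mem_cube_succ_sdiff {n : ℕ} {x : ι → ℤ}
    (hx : x ∈ cube ι (n + 1) \ cube ι n) :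
    ∃ i, (n + 1 : ℤ) ≤ |x i| := by
  simpa [mem_cube] using (mem_sdiff.mp hx).2

lemma card_cube_succ_sdiff_le (n : ℕ) :
    #(cube (Fin 3) (n + 1) \ cube (Fin 3) n) ≤ 26 * (n + 1) ^ 2 := by
  rw [card_sdiff_of_subset (cube_mono n.le_succ), card_cube, card_cube, Fintype.card_fin]
  have : (2 * (n + 1) + 1) ^ 3 = (2 * n + 1) ^ 3 + (24 * n ^ 2 + 48 * n + 26) := by ring
  rw [this, Nat.add_sub_cancel_left]
  nlinarith

end Cube

lemma sum_range_inv_max_sq_le {K : ℝ} (hK : 0 < K) (N : ℕ) :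
    ∑ n ∈ range N, (max K (n + 1) ^ 2)⁻¹ ≤ 3 / K := by
  set M := ⌊K⌋₊
  have hMK : (M : ℝ) ≤ K := Nat.floor_le hK.le
  have hKM : K < M + 1 := Nat.lt_floor_add_one K
  have head : ∑ n ∈ range M, (max K (n + 1) ^ 2)⁻¹ ≤ 1 / K :=
    calc ∑ n ∈ range M, (max K (n + 1) ^ 2)⁻¹ ≤ ∑ _n ∈ range M, (K ^ 2)⁻¹ := by
          gcongr; exact le_max_left _ _
      _ = M / K ^ 2 := by simp [div_eq_mul_inv]
      _ ≤ K / K ^ 2 := by gcongr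
      _ = 1 / K := by field_simp
  have tail : ∑ n ∈ Ico M (M + N), (max K (n + 1) ^ 2)⁻¹ ≤ 2 / K :=
    calc ∑ n ∈ Ico M (M + N), (max K (n + 1) ^ 2)⁻¹
        ≤ ∑ n ∈ Ico M (M + N), (((n + 1 : ℕ) : ℝ) ^ 2)⁻¹ := by
          gcongr with n; push_cast; exact le_max_right _ _
      _ = ∑ m ∈ Ioo M (M + N + 1), ((m : ℝ) ^ 2)⁻¹ := by
          rw [sum_Ico_add' (fun m : ℕ => ((m : ℝ) ^ 2)⁻¹), Ico_add_one_left_eq_Ioo]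
      _ ≤ 2 / (M + 1) := sum_Ioo_inv_sq_le _ _
      _ ≤ 2 / K := by gcongr
  calc ∑ n ∈ range N, (max K (n + 1) ^ 2)⁻¹
        ≤ ∑ n ∈ range (M + N), (max K (n + 1) ^ 2)⁻¹ :=
        sum_le_sum_of_subset_of_nonneg (range_subset_range.mpr (by omega))
          fun _ _ _ => by positivity
    _ = ∑ n ∈ range M, (max K (n + 1) ^ 2)⁻¹ +
          ∑ n ∈ Ico M (M + N), (max K (n + 1) ^ 2)⁻¹ :=
        (sum_range_add_sum_Ico _ (by omega)).symm
    _ ≤ 1 / K + 2 / K := add_le_add head tail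
    _ = 3 / K := by ring

/-- `w_K(x) = min (1 / (K² |x|²)) (1 / |x|⁴)`; it vanishes at `x = 0` because `1 / 0 = 0`. -/
noncomputable def latticeWeight (K : ℝ) (x : Fin 3 → ℤ) : ℝ :=
  1 / (en x ^ 2 * max K (en x) ^ 2)

section LatticeWeight

variable {K : ℝ}

lemma latticeWeight_nonneg (x : Fin 3 → ℤ) : 0 ≤ latticeWeight K x := by
  unfold latticeWeight; positivity

lemma latticeWeight_zero : latticeWeight K 0 = 0 := by
  simp [latticeWeight, en]

lemma sum_cube_succ_sdiff_latticeWeight_le (hK : 0 < K) (n : ℕ) :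
    ∑ x ∈ cube (Fin 3) (n + 1) \ cube (Fin 3) n, latticeWeight K x ≤
      26 * (max K (n + 1) ^ 2)⁻¹ :=
  calc ∑ x ∈ cube (Fin 3) (n + 1) \ cube (Fin 3) n, latticeWeight K x
      ≤ ∑ _x ∈ cube (Fin 3) (n + 1) \ cube (Fin 3) n,
          1 / ((n + 1) ^ 2 * max K (n + 1) ^ 2) := by
        refine sum_le_sum fun x hx => ?_
        obtain ⟨i, hi⟩ := exists_le_abs_of_mem_cube_succ_sdiff hx
        have hn : (n + 1 : ℝ) ≤ en x := le_trans (by exact_mod_cast hi) (abs_le_en x i)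
        unfold latticeWeight
        gcongr
    _ ≤ (26 * (n + 1) ^ 2 : ℕ) * (1 / ((n + 1) ^ 2 * max K (n + 1) ^ 2)) := by
        rw [sum_const, nsmul_eq_mul]
        gcongr
        exact card_cube_succ_sdiff_le n
    _ = 26 * (max K (n + 1) ^ 2)⁻¹ := by
        push_cast
        field_simp

lemma sum_cube_latticeWeight_le (hK : 0 < K) (N : ℕ) :
    ∑ x ∈ cube (Fin 3) N, latticeWeight K x ≤ 78 / K := by
  rw [sum_eq_sum_range_sdiff _ cube_mono, cube_zero, sum_singleton, latticeWeight_zero, zero_add]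
  calc ∑ n ∈ range N, ∑ x ∈ cube (Fin 3) (n + 1) \ cube (Fin 3) n, latticeWeight K x
      ≤ ∑ n ∈ range N, 26 * (max K (n + 1) ^ 2)⁻¹ :=
        sum_le_sum fun n _ => sum_cube_succ_sdiff_latticeWeight_le hK n
    _ ≤ 26 * (3 / K) := by
        rw [← mul_sum]
        gcongr
        exact sum_range_inv_max_sq_le hK N
    _ = 78 / K := by ring

lemma sum_latticeWeight_le (hK : 0 < K) (T : Finset (Fin 3 → ℤ)) :
    ∑ x ∈ T, latticeWeight K x ≤ 78 / K := by
  obtain ⟨N, hN⟩ := exists_subset_cube T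
  exact (sum_le_sum_of_subset_of_nonneg hN fun x _ _ => latticeWeight_nonneg x).trans
    (sum_cube_latticeWeight_le hK N)

lemma sum_latticeWeight_comp_le {α : Type*} (hK : 0 < K) (s : Finset α) {e : α → Fin 3 → ℤ}
    (he : Function.Injective e) : ∑ a ∈ s, latticeWeight K (e a) ≤ 78 / K :=
  (sum_map s ⟨e, he⟩ _).symm.trans_le (sum_latticeWeight_le hK _)

end LatticeWeight

/-- There exists `c > 0` such that for all nonzero `k ∈ ℤ³`,
`∑_{j ≠ 0, j ≠ k} 1/(|j|²|k−j|²) ≤ c/|k|`. -/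
theorem key_lemma :
    ∃ c : ℝ, 0 < c ∧ ∀ k : Fin 3 → ℤ, k ≠ 0 →
      (∑' j : {j : Fin 3 → ℤ // j ≠ 0 ∧ j ≠ k},
        1 / (en j.1 ^ 2 * en (k - j.1) ^ 2)) ≤ c / en k := by
  refine ⟨624, by norm_num, fun k hk => ?_⟩
  have hK : 0 < en k := en_pos hk
  refine Real.tsum_le_of_sum_le (fun j => by positivity) fun s => ?_
  calc ∑ j ∈ s, 1 / (en j.1 ^ 2 * en (k - j.1) ^ 2)
      ≤ ∑ j ∈ s, 4 * (latticeWeight (en k) j.1 + latticeWeight (en k) (k - j.1)) := by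
        refine sum_le_sum fun j _ => one_div_sq_mul_sq_le (en_nonneg _) (en_nonneg _) ?_
        simpa using en_add_le j.1 (k - j.1)
    _ = 4 * (∑ j ∈ s, latticeWeight (en k) j.1 +
          ∑ j ∈ s, latticeWeight (en k) (k - j.1)) := by
        rw [← mul_sum, sum_add_distrib]
    _ ≤ 4 * (78 / en k + 78 / en k) := by
        gcongr
        · exact sum_latticeWeight_comp_le hK s Subtype.val_injective
        · exact sum_latticeWeight_comp_le hK s (sub_right_injective.comp Subtype.val_injective)
    _ = 624 / en k := by ring
end

section
/- Let (X, ‖·‖) be a Banach space and B : X × X → X a continuous bilinear map with operator norm at most η > 0. Then for any x₀ ∈ X with 4η‖x₀‖ < 1, there exists a unique x ∈ X with ‖x‖ < 1/(2η) satisfying x = x₀ + B(x,x); moreover this solution satisfies ‖x‖ ≤ 2‖x₀‖. -/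
/-- Abstract bilinear fixed point lemma: if `B` is bilinear with
`‖B(u,v)‖ ≤ η‖u‖‖v‖` and `4η‖x₀‖ < 1`, then `x = x₀ + B(x,x)` has a unique
solution with `‖x‖ < 1/(2η)`, and this solution satisfies `‖x‖ ≤ 2‖x₀‖`. -/
theorem bilinear_fixed_point {X : Type*} [NormedAddCommGroup X] [NormedSpace ℝ X]
    [CompleteSpace X] (B : X →L[ℝ] X →L[ℝ] X) (η : ℝ) (hη : 0 < η)
    (hB : ∀ u v : X, ‖B u v‖ ≤ η * ‖u‖ * ‖v‖)
    (x₀ : X) (hx₀ : 4 * η * ‖x₀‖ < 1) :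
    ∃ x : X, ‖x‖ < 1 / (2 * η) ∧ x = x₀ + B x x ∧ ‖x‖ ≤ 2 * ‖x₀‖ ∧
      ∀ y : X, ‖y‖ < 1 / (2 * η) → y = x₀ + B y y → y = x := by
  set r : ℝ := 2 * ‖x₀‖ with hr
  have hr0 : 0 ≤ r := by positivity
  have hrlt : r < 1 / (2 * η) := by
    rw [lt_div_iff₀ (by positivity)]
    nlinarith [norm_nonneg x₀]
  -- key difference identity
  have hdiff : ∀ a b : X, (x₀ + B a a) - (x₀ + B b b) = B a (a - b) + B (a - b) b := by
    intro a b
    simp only [map_sub, ContinuousLinearMap.sub_apply]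
    abel
  have hdiffnorm : ∀ a b : X, ‖(x₀ + B a a) - (x₀ + B b b)‖ ≤ η * (‖a‖ + ‖b‖) * ‖a - b‖ := by
    intro a b
    rw [hdiff]
    calc ‖B a (a - b) + B (a - b) b‖ ≤ ‖B a (a - b)‖ + ‖B (a - b) b‖ := norm_add_le _ _
      _ ≤ η * ‖a‖ * ‖a - b‖ + η * ‖a - b‖ * ‖b‖ := add_le_add (hB _ _) (hB _ _)
      _ = η * (‖a‖ + ‖b‖) * ‖a - b‖ := by ring
  -- setup the contraction on the closed ball
  have hmaps : ∀ y : X, ‖y‖ ≤ r → ‖x₀ + B y y‖ ≤ r := by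
    intro y hy
    calc ‖x₀ + B y y‖ ≤ ‖x₀‖ + ‖B y y‖ := norm_add_le _ _
      _ ≤ ‖x₀‖ + η * ‖y‖ * ‖y‖ := by linarith [hB y y]
      _ ≤ r := by
          have h1 : η * ‖y‖ * ‖y‖ ≤ η * r * r := by nlinarith [mul_le_mul hy hy (norm_nonneg y) hr0, hη.le]
          have h2 : 4 * η * ‖x₀‖ * ‖x₀‖ ≤ 1 * ‖x₀‖ :=
            mul_le_mul_of_nonneg_right hx₀.le (norm_nonneg x₀)
          simp only [hr] at h1 ⊢
          nlinarith
  haveI : CompleteSpace (Metric.closedBall (0:X) r) :=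
    Metric.isClosed_closedBall.completeSpace_coe
  haveI : Nonempty (Metric.closedBall (0:X) r) :=
    ⟨⟨0, by simp [hr0]⟩⟩
  set K : NNReal := ⟨4 * η * ‖x₀‖, by positivity⟩ with hK
  have hK1 : K < 1 := by
    rw [← NNReal.coe_lt_coe]
    exact_mod_cast hx₀
  set f : Metric.closedBall (0:X) r → Metric.closedBall (0:X) r :=
    fun y => ⟨x₀ + B y y, by
      simp only [Metric.mem_closedBall, dist_zero_right]
      exact hmaps _ (mem_closedBall_zero_iff.mp y.2)⟩ with hf
  have hlip : LipschitzWith K f := by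
    intro a b
    have ha : ‖(a : X)‖ ≤ r := mem_closedBall_zero_iff.mp a.2
    have hb : ‖(b : X)‖ ≤ r := mem_closedBall_zero_iff.mp b.2
    rw [edist_dist, edist_dist]
    rw [← ENNReal.ofReal_coe_nnreal, ← ENNReal.ofReal_mul (by positivity)]
    apply ENNReal.ofReal_le_ofReal
    have : dist (f a) (f b) = ‖(x₀ + B a a) - (x₀ + B b b)‖ := by
      simp [hf, Subtype.dist_eq, dist_eq_norm]
    rw [this]
    have hd : dist a b = ‖(a : X) - b‖ := by simp [Subtype.dist_eq, dist_eq_norm]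
    rw [hd]
    calc ‖(x₀ + B a a) - (x₀ + B b b)‖ ≤ η * (‖(a:X)‖ + ‖(b:X)‖) * ‖(a:X) - b‖ :=
          hdiffnorm _ _
      _ ≤ (K : ℝ) * ‖(a:X) - b‖ := by
          apply mul_le_mul_of_nonneg_right _ (norm_nonneg _)
          have : (K : ℝ) = 4 * η * ‖x₀‖ := rfl
          rw [this]
          nlinarith [norm_nonneg ((a:X) - b)]
  have hcontract : ContractingWith K f := ⟨hK1, hlip⟩
  set x := hcontract.fixedPoint f with hx
  have hfx : f x = x := hcontract.fixedPoint_isFixedPt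
  have hxball : ‖(x : X)‖ ≤ r := mem_closedBall_zero_iff.mp x.2
  have hxeq : (x : X) = x₀ + B x x := by
    conv_lhs => rw [← hfx]
  refine ⟨x, lt_of_le_of_lt hxball hrlt, hxeq, hxball, ?_⟩
  intro y hy hyeq
  by_contra hne
  have hxy : 0 < ‖y - (x : X)‖ := by
    rw [norm_pos_iff, sub_ne_zero]; exact hne
  have h1 : ‖y - (x : X)‖ ≤ η * (‖y‖ + ‖(x:X)‖) * ‖y - (x:X)‖ := by
    calc ‖y - (x : X)‖ = ‖(x₀ + B y y) - (x₀ + B x x)‖ := by rw [← hyeq, ← hxeq]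
      _ ≤ η * (‖y‖ + ‖(x:X)‖) * ‖y - (x:X)‖ := hdiffnorm _ _
  have hxlt : ‖(x:X)‖ < 1 / (2 * η) := lt_of_le_of_lt hxball hrlt
  have h2 : η * (‖y‖ + ‖(x:X)‖) < 1 := by
    have h2η : 0 < 2 * η := by positivity
    rw [lt_div_iff₀ h2η] at hy hxlt
    nlinarith
  nlinarith
end
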